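/- arXiv:1302.6536 — 2 statements merged into one kernel-verified Lean document; each statement's English description precedes it below -/
import Mathlib

section
/- The 3-string braid group of the sphere B_3(S²) is a finite group of order 12, isomorphic to the semidirect product Z/3 ⋊ Z/4 with the non-trivial action of Z/4 on Z/3. -/
/-!
Write `s = σ₁`, `t = σ₂`. The second relation gives `t² = s⁻²`, so `s²` commutes with `t`; since
`s t s` conjugates `s` to `t`, it conjugates `s²` to `t²`, and hence `s² = t² = s⁻²`. With
`a = t s⁻¹` and `b = s` this yields `b⁴ = 1`, `a³ = 1` and `b a b⁻¹ = a⁻¹`, the relations of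
`ℤ/3 ⋊ ℤ/4` with `ℤ/4` acting by inversion. Conversely `b` and `a b` satisfy the relations of
`B₃(S²)` there, and the two assignments are mutually inverse. Finally `Aut(ℤ/3) = {1, inversion}`,
so every non-trivial action of `ℤ/4` on `ℤ/3` is the inversion action.
-/

open FreeGroup

/-- The relations of the presentation of the 3-string sphere braid group
`B₃(S²) = ⟨σ₁, σ₂ | σ₁σ₂σ₁ = σ₂σ₁σ₂, σ₁σ₂²σ₁ = 1⟩`,
with generators indexed by `Bool` (`true ↦ σ₁`, `false ↦ σ₂`). -/
def sphereBraid3Rels : Set (FreeGroup Bool) :=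
  { of true * of false * of true * (of false * of true * of false)⁻¹,
    of true * of false * of false * of true }

/-- The 3-string braid group of the sphere `B₃(S²)`. -/
def SphereBraidGroupThree : Type := PresentedGroup sphereBraid3Rels

instance : Group SphereBraidGroupThree := by unfold SphereBraidGroupThree; infer_instance

open Multiplicative (ofAdd toAdd)

section ZModLift

variable {H : Type*} [Group H]

def zmodLift (n : ℕ) (x : H) (hx : x ^ n = 1) : Multiplicative (ZMod n) →* H :=
  AddMonoidHom.toMultiplicativeLeft <| ZMod.lift n
    ⟨zmultiplesHom (Additive H) (Additive.ofMul x), by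
      rw [zmultiplesHom_apply, natCast_zsmul, ← ofMul_pow, hx, ofMul_one]⟩

@[simp]
lemma zmodLift_ofAdd_one {n : ℕ} (x : H) (hx : x ^ n = 1) : zmodLift n x hx (ofAdd 1) = x := by
  simp only [zmodLift, AddMonoidHom.coe_toMultiplicativeLeft, Function.comp_apply, toAdd_ofAdd]
  rw [← Int.cast_one (R := ZMod n), ZMod.lift_coe]
  simp

lemma ofAdd_one_pow_val {n : ℕ} [NeZero n] (g : Multiplicative (ZMod n)) :
    ofAdd (1 : ZMod n) ^ (toAdd g).val = g := by
  rw [← ofAdd_nsmul, nsmul_one, ZMod.natCast_zmod_val, ofAdd_toAdd]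

lemma ofAdd_one_pow_self (n : ℕ) : ofAdd (1 : ZMod n) ^ n = 1 := by
  rw [← ofAdd_nsmul, nsmul_one, ZMod.natCast_self, ofAdd_zero]

lemma MonoidHom.ext_mzmod {n : ℕ} [NeZero n] {M : Type*} [Monoid M] {f g : Multiplicative (ZMod n) →* M}
    (h : f (ofAdd 1) = g (ofAdd 1)) : f = g :=
  MonoidHom.ext fun x => by rw [← ofAdd_one_pow_val x, map_pow, map_pow, h]

end ZModLift

def invAction (A : Type*) [CommGroup A] : Multiplicative (ZMod 4) →* MulAut A :=
  zmodLift 4 (MulEquiv.inv A) (by ext; simp [pow_succ])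

@[simp]
lemma invAction_ofAdd_one (A : Type*) [CommGroup A] : invAction A (ofAdd 1) = MulEquiv.inv A :=
  zmodLift_ofAdd_one _ _

lemma mulAut_zmod_three_eq_inv_of_ne_one {α : MulAut (Multiplicative (ZMod 3))} (hα : α ≠ 1) :
    α = MulEquiv.inv _ := by
  have hgen : α (ofAdd 1) ≠ 1 := α.map_ne_one_iff.2 (by decide)
  have hcases : ∀ w : Multiplicative (ZMod 3), w ≠ 1 → w = ofAdd 1 ∨ w = (ofAdd 1)⁻¹ := by
    decide
  rcases hcases _ hgen with h | h
  · exact absurd (MulEquiv.toMonoidHom_injective (MonoidHom.ext_mzmod (by simpa using h))) hα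
  · exact MulEquiv.toMonoidHom_injective (MonoidHom.ext_mzmod (by simpa using h))

lemma eq_invAction_of_ne_one {φ : Multiplicative (ZMod 4) →* MulAut (Multiplicative (ZMod 3))}
    (hφ : φ ≠ 1) : φ = invAction _ :=
  MonoidHom.ext_mzmod <| by
    rw [invAction_ofAdd_one]
    exact mulAut_zmod_three_eq_inv_of_ne_one fun h => hφ (MonoidHom.ext_mzmod (by simpa using h))

structure SatisfiesSphereBraid3Rels {G : Type*} [Group G] (s t : G) : Prop where
  braid : s * t * s = t * s * t
  loop : s * t * t * s = 1

namespace SatisfiesSphereBraid3Rels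

variable {G : Type*} [Group G] {s t : G}

lemma mul_self_right (h : SatisfiesSphereBraid3Rels s t) : t * t = (s * s)⁻¹ :=
  calc t * t = s⁻¹ * (s * t * t * s) * s⁻¹ := by group
    _ = (s * s)⁻¹ := by rw [h.loop]; group

lemma commute_mul_self_left (h : SatisfiesSphereBraid3Rels s t) : Commute (s * s) t := by
  rw [← inv_inv (s * s), ← h.mul_self_right]
  exact ((Commute.refl t).mul_left (Commute.refl t)).inv_left

lemma mul_self_eq (h : SatisfiesSphereBraid3Rels s t) : s * s = t * t := by
  have hΔ : s * t * s * s = t * (s * t * s) := (congrArg (· * s) h.braid).trans (by group)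
  refine mul_right_cancel (b := s * t * s) ?_
  calc s * s * (s * t * s) = s * (s * s * t) * s := by group
    _ = s * (t * (s * s)) * s := by rw [h.commute_mul_self_left.eq]
    _ = s * t * s * s * s := by group
    _ = t * (s * t * s) * s := by rw [hΔ]
    _ = t * (s * t * s * s) := by group
    _ = t * (t * (s * t * s)) := by rw [hΔ]
    _ = t * t * (s * t * s) := by group

lemma pow_four_left (h : SatisfiesSphereBraid3Rels s t) : s ^ 4 = 1 :=
  calc s ^ 4 = s * s * (s * s) := by simp only [pow_succ, pow_zero, one_mul, mul_assoc]
    _ = 1 := mul_eq_one_iff_eq_inv.2 (h.mul_self_eq.trans h.mul_self_right)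

lemma mul_inv_pow_three (h : SatisfiesSphereBraid3Rels s t) : (t * s⁻¹) ^ 3 = 1 := by
  have hx : t * s⁻¹ = t⁻¹ * s :=
    calc t * s⁻¹ = t * (t * t)⁻¹ * (s * s) * s⁻¹ := by rw [← h.mul_self_eq]; group
      _ = t⁻¹ * s := by group
  have hconj : s * t * s⁻¹ = t⁻¹ * s * t :=
    calc s * t * s⁻¹ = t⁻¹ * (t * s * t) * s⁻¹ := by group
      _ = t⁻¹ * s * t := by rw [← h.braid]; group
  calc (t * s⁻¹) ^ 3 = (t⁻¹ * s) * (t * s⁻¹) * (t * s⁻¹) := by rw [← hx, pow_three]; group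
    _ = t⁻¹ * (s * t * s⁻¹) * t * s⁻¹ := by group
    _ = (t * t)⁻¹ * s * (t * t) * s⁻¹ := by rw [hconj]; group
    _ = 1 := by rw [h.mul_self_right]; group

lemma conj_mul_inv (h : SatisfiesSphereBraid3Rels s t) :
    s * (t * s⁻¹) * s⁻¹ = (t * s⁻¹)⁻¹ :=
  calc s * (t * s⁻¹) * s⁻¹ = s * t * (s * s)⁻¹ := by group
    _ = s * t * (t * t)⁻¹ := by rw [h.mul_self_eq]
    _ = (t * s⁻¹)⁻¹ := by group

lemma of_conj_eq_inv {a b : G} (ha : a ^ 3 = 1) (hb : b ^ 4 = 1) (hab : b * a * b⁻¹ = a⁻¹) :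
    SatisfiesSphereBraid3Rels b (a * b) := by
  have ha' : a⁻¹ = a * a := inv_eq_of_mul_eq_one_right (by rw [← pow_three, ha])
  have hab' : b * a⁻¹ * b⁻¹ = a :=
    calc b * a⁻¹ * b⁻¹ = (b * a * b⁻¹)⁻¹ := by group
      _ = a := by rw [hab, inv_inv]
  have hb' : b * b * b * b = 1 := by simpa only [pow_succ, pow_zero, one_mul] using hb
  constructor
  · calc b * (a * b) * b = (b * a * b⁻¹) * (b * b * b) := by group
      _ = a * (b * a⁻¹ * b⁻¹) * (b * b * b) := by rw [hab, hab', ha']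
      _ = a * b * (b * a * b⁻¹) * b * b := by rw [hab]; group
      _ = a * b * b * (a * b) := by group
  · calc b * (a * b) * (a * b) * b = (b * a * b⁻¹) * (b * (b * a * b⁻¹) * b⁻¹) * (b * b * b * b) := by
          simp [mul_assoc]
      _ = 1 := by rw [hab, hab', hb']; group

end SatisfiesSphereBraid3Rels

namespace SphereBraidGroupThree

def σ₁ : SphereBraidGroupThree := PresentedGroup.of true

def σ₂ : SphereBraidGroupThree := PresentedGroup.of false

lemma hom_ext {G : Type*} [Group G] {f g : SphereBraidGroupThree →* G} (h₁ : f σ₁ = g σ₁)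
    (h₂ : f σ₂ = g σ₂) : f = g :=
  PresentedGroup.ext fun b => by cases b; exacts [h₂, h₁]

variable {G : Type*} [Group G] {s t : G}

def lift (h : SatisfiesSphereBraid3Rels s t) : SphereBraidGroupThree →* G :=
  PresentedGroup.toGroup (f := fun b => cond b s t) <| by
    rintro r (rfl | rfl)
    · simp [h.braid]
    · simpa using h.loop

@[simp]
lemma lift_σ₁ (h : SatisfiesSphereBraid3Rels s t) : lift h σ₁ = s :=
  PresentedGroup.toGroup.of _

@[simp]
lemma lift_σ₂ (h : SatisfiesSphereBraid3Rels s t) : lift h σ₂ = t :=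
  PresentedGroup.toGroup.of _

lemma satisfiesSphereBraid3Rels_σ : SatisfiesSphereBraid3Rels σ₁ σ₂ where
  braid := by
    have h := PresentedGroup.one_of_mem (rels := sphereBraid3Rels) (Set.mem_insert _ _)
    rwa [_root_.map_mul, _root_.map_inv, mul_inv_eq_one] at h
  loop := PresentedGroup.one_of_mem (rels := sphereBraid3Rels) (Set.mem_insert_of_mem _ rfl)

end SphereBraidGroupThree

lemma comp_aut_eq_conj_comp_of_ofAdd_one {N H : Type*} [Group N] [Group H] {m : ℕ} [NeZero m]
    {φ : Multiplicative (ZMod m) →* MulAut N} {fn : N →* H} {fg : Multiplicative (ZMod m) →* H}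
    (h : fn.comp (φ (ofAdd 1)).toMonoidHom = (MulAut.conj (fg (ofAdd 1))).toMonoidHom.comp fn)
    (g : Multiplicative (ZMod m)) :
    fn.comp (φ g).toMonoidHom = (MulAut.conj (fg g)).toMonoidHom.comp fn := by
  rw [← ofAdd_one_pow_val g]
  induction (toAdd g).val with
  | zero => ext; simp
  | succ k ih =>
    ext n
    have ih' := DFunLike.congr_fun ih (φ (ofAdd 1) n)
    have h' := DFunLike.congr_fun h n
    simp only [MonoidHom.comp_apply, MulEquiv.coe_toMonoidHom, MulAut.conj_apply] at ih' h' ⊢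
    rw [pow_succ, _root_.map_mul, _root_.map_mul, MulAut.mul_apply, ih', h']
    group

def invActionLift {H : Type*} [Group H] {n : ℕ} [NeZero n] {a b : H} (ha : a ^ n = 1)
    (hb : b ^ 4 = 1) (hab : b * a * b⁻¹ = a⁻¹) :
    Multiplicative (ZMod n) ⋊[invAction _] Multiplicative (ZMod 4) →* H :=
  SemidirectProduct.lift (zmodLift n a ha) (zmodLift 4 b hb) <|
    comp_aut_eq_conj_comp_of_ofAdd_one <| MonoidHom.ext_mzmod <| by simp [hab]

open SemidirectProduct (inl inr inl_aut)

abbrev Dic3 : Type := Multiplicative (ZMod 3) ⋊[invAction _] Multiplicative (ZMod 4)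

namespace SphereBraidGroupThree

def toDic3 : SphereBraidGroupThree →* Dic3 :=
  lift <| .of_conj_eq_inv (a := inl (ofAdd 1)) (b := inr (ofAdd 1))
    (by rw [← _root_.map_pow, ofAdd_one_pow_self, _root_.map_one])
    (by rw [← _root_.map_pow, ofAdd_one_pow_self, _root_.map_one])
    (by rw [← _root_.map_inv inr, ← inl_aut]; simp)

@[simp]
lemma toDic3_σ₁ : toDic3 σ₁ = inr (ofAdd 1) := lift_σ₁ _

@[simp]
lemma toDic3_σ₂ : toDic3 σ₂ = inl (ofAdd 1) * inr (ofAdd 1) := lift_σ₂ _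

def ofDic3 : Dic3 →* SphereBraidGroupThree :=
  invActionLift satisfiesSphereBraid3Rels_σ.mul_inv_pow_three
    satisfiesSphereBraid3Rels_σ.pow_four_left satisfiesSphereBraid3Rels_σ.conj_mul_inv

@[simp]
lemma ofDic3_inl : ofDic3 (inl (ofAdd 1)) = σ₂ * σ₁⁻¹ := by
  simp [ofDic3, invActionLift]

@[simp]
lemma ofDic3_inr : ofDic3 (inr (ofAdd 1)) = σ₁ := by
  simp [ofDic3, invActionLift]

def mulEquivDic3 : SphereBraidGroupThree ≃* Dic3 :=
  MonoidHom.toMulEquiv toDic3 ofDic3 (hom_ext (by simp) (by simp))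
    (SemidirectProduct.hom_ext (MonoidHom.ext_mzmod (by simp)) (MonoidHom.ext_mzmod (by simp)))

end SphereBraidGroupThree

/-- `B₃(S²)` is a finite group of order 12, isomorphic to the semidirect product
`ℤ/3 ⋊ ℤ/4` with the non-trivial action of `ℤ/4` on `ℤ/3` (there is a unique such
non-trivial action, namely inversion). -/
theorem sphereBraidGroupThree_card_and_iso :
    Nat.card SphereBraidGroupThree = 12 ∧
      ∀ φ : Multiplicative (ZMod 4) →* MulAut (Multiplicative (ZMod 3)), φ ≠ 1 →
        Nonempty (SphereBraidGroupThree ≃*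
          SemidirectProduct (Multiplicative (ZMod 3)) (Multiplicative (ZMod 4)) φ) := by
  refine ⟨?_, fun φ hφ => ?_⟩
  · rw [Nat.card_congr SphereBraidGroupThree.mulEquivDic3.toEquiv, SemidirectProduct.card]
    simp
  · obtain rfl := eq_invAction_of_ne_one hφ
    exact ⟨SphereBraidGroupThree.mulEquivDic3⟩
end

section
/- Let G be a group whose centre Z(G) contains an element z of order 2 such that z is the unique torsion element of G other than the identity, and suppose every finite-order element of G is torsion. Then every infinite virtually cyclic subgroup of G is isomorphic to Z or to Z × Z/2. -/
/-!
Let `K` be virtually cyclic with all torsion central. A generator `x` of the normal core of a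
cyclic subgroup of finite index is central (an element inverting `x` turns out to be torsion,
hence central), so `Z(K)` has finite index and, through the transfer `K → Z(K)`, every commutator
has finite order. A torsion-free such `K` is therefore abelian, and `g ↦ g ^ [K : C]` embeds it
into the cyclic group `C`.

In `H`, the torsion elements form the finite central subgroup `N = H ∩ ⟨z⟩`; the quotient
`H ⧸ N` is torsion-free and virtually cyclic, hence infinite cyclic, and lifting a generator
splits `H ≅ ℤ × N`.
-/

open Subgroup

def IsVirtuallyCyclic (K : Type*) [Group K] : Prop :=
  ∃ C : Subgroup K, IsCyclic C ∧ C.FiniteIndex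

section

variable {K : Type*} [Group K]

theorem conj_eq_self_or_inv_of_normal_zpowers {x : K} (hx : ¬IsOfFinOrder x)
    [(zpowers x).Normal] (h : K) : h * x * h⁻¹ = x ∨ h * x * h⁻¹ = x⁻¹ := by
  obtain ⟨n, hn⟩ := mem_zpowers_iff.mp (Normal.conj_mem ‹_› x (mem_zpowers x) h)
  obtain ⟨p, hp⟩ := mem_zpowers_iff.mp (Normal.conj_mem ‹_› x (mem_zpowers x) h⁻¹)
  have hnp : x ^ (n * p) = x ^ (1 : ℤ) :=
    calc x ^ (n * p) = h * (h⁻¹ * x * h⁻¹⁻¹) * h⁻¹ := by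
          rw [zpow_mul, hn, conj_zpow, hp]
      _ = x ^ (1 : ℤ) := by group
  rcases Int.eq_one_or_neg_one_of_mul_eq_one
    (injective_zpow_iff_not_isOfFinOrder.mpr hx hnp) with rfl | rfl
  · exact .inl (by simpa using hn.symm)
  · exact .inr (by simpa using hn.symm)

theorem mem_center_of_normal_zpowers {x : K} (hx : ¬IsOfFinOrder x)
    [(zpowers x).Normal] [(zpowers x).FiniteIndex]
    (htor : ∀ g : K, IsOfFinOrder g → g ∈ center K) : x ∈ center K := by
  refine mem_center_iff.mpr fun h => ?_
  rcases conj_eq_self_or_inv_of_normal_zpowers hx h with hc | hc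
  · exact eq_mul_of_mul_inv_eq hc
  -- `h` inverts `x`, hence also the power `h ^ index = x ^ e`, which it centralizes: so `e = 0`.
  obtain ⟨e, he⟩ := mem_zpowers_iff.mp ((zpowers x).pow_index_mem h)
  have hee : x ^ e = x ^ (-e) :=
    calc x ^ e = h * x ^ e * h⁻¹ := by rw [he]; group
      _ = x ^ (-e) := by rw [← conj_zpow, hc, inv_zpow, zpow_neg]
  have he0 : e = 0 := by
    have := injective_zpow_iff_not_isOfFinOrder.mpr hx hee
    omega
  have hh : IsOfFinOrder h := isOfFinOrder_iff_pow_eq_one.mpr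
    ⟨_, FiniteIndex.index_ne_zero.bot_lt, by rw [← he, he0, zpow_zero]⟩
  have hxx : x = x⁻¹ := by rw [← hc, ← mem_center_iff.mp (htor h hh) x, mul_inv_cancel_right]
  exact absurd (isOfFinOrder_iff_pow_eq_one.mpr
    ⟨2, two_pos, by rw [pow_two]; exact mul_eq_one_iff_eq_inv.mpr hxx⟩) hx

theorem IsVirtuallyCyclic.exists_normal_zpowers [Infinite K] (hK : IsVirtuallyCyclic K) :
    ∃ x : K, ¬IsOfFinOrder x ∧ (zpowers x).Normal ∧ (zpowers x).FiniteIndex := by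
  obtain ⟨C, hC, hCfi⟩ := hK
  have : IsCyclic C.normalCore := isCyclic_of_le C.normalCore_le
  obtain ⟨x, hx⟩ := C.normalCore.isCyclic_iff_exists_zpowers_eq_top.mp this
  have : (zpowers x).FiniteIndex := hx ▸ C.finiteIndex_normalCore
  refine ⟨x, fun hfin => ?_, hx ▸ C.normalCore_normal, this⟩
  have : Finite (zpowers x) := hfin.finite_zpowers
  exact not_finite_iff_infinite.mpr ‹Infinite K›
    ((finite_iff_finite_and_finiteIndex (zpowers x)).mpr ⟨this, ‹_›⟩)

theorem IsVirtuallyCyclic.finiteIndex_center (hK : IsVirtuallyCyclic K)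
    (htor : ∀ g : K, IsOfFinOrder g → g ∈ center K) : (center K).FiniteIndex := by
  cases finite_or_infinite K
  · infer_instance
  · obtain ⟨x, hx, _, _⟩ := hK.exists_normal_zpowers
    exact finiteIndex_of_le (zpowers_le.mpr (mem_center_of_normal_zpowers hx htor))

open scoped commutatorElement in
theorem isOfFinOrder_commutatorElement [(center K).FiniteIndex] (a b : K) :
    IsOfFinOrder ⁅a, b⁆ := by
  have h1 : MonoidHom.transferCenterPow K ⁅a, b⁆ = 1 := by
    rw [map_commutatorElement, commutatorElement_eq_one_iff_mul_comm]
    exact Subtype.ext (mem_center_iff.mp (MonoidHom.transferCenterPow K b).2 _)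
  refine isOfFinOrder_iff_pow_eq_one.mpr
    ⟨(center K).index, FiniteIndex.index_ne_zero.bot_lt, ?_⟩
  simpa only [MonoidHom.transferCenterPow_apply, Subtype.ext_iff, OneMemClass.coe_one] using h1

theorem IsVirtuallyCyclic.of_surjective {L : Type*} [Group L] (hK : IsVirtuallyCyclic K)
    {f : K →* L} (hf : Function.Surjective f) : IsVirtuallyCyclic L := by
  obtain ⟨C, hC, hCfi⟩ := hK
  exact ⟨C.map f, isCyclic_of_surjective _ (f.subgroupMap_surjective C),
    ⟨ne_zero_of_dvd_ne_zero hCfi.index_ne_zero (index_map_dvd C hf)⟩⟩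

theorem isCyclic_of_isMulTorsionFree_of_finiteIndex {A : Type*} [CommGroup A] [IsMulTorsionFree A]
    (C : Subgroup A) [IsCyclic C] [C.FiniteIndex] : IsCyclic A :=
  isCyclic_of_injective ((powMonoidHom (α := A) C.index).codRestrict C C.pow_index_mem)
    fun _ _ h => IsMulTorsionFree.pow_left_injective FiniteIndex.index_ne_zero
      (congrArg Subtype.val h)

open scoped commutatorElement in
theorem IsVirtuallyCyclic.isCyclic (hK : IsVirtuallyCyclic K)
    (htf : ∀ g : K, IsOfFinOrder g → g = 1) : IsCyclic K := by
  have := hK.finiteIndex_center fun g hg => htf g hg ▸ one_mem _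
  let _ : CommGroup K := { mul_comm := fun a b =>
    commutatorElement_eq_one_iff_mul_comm.mp (htf _ (isOfFinOrder_commutatorElement a b)) }
  have : IsMulTorsionFree K := .of_not_isOfFinOrder fun g hg hfin => hg (htf g hfin)
  obtain ⟨C, hC, hCfi⟩ := hK
  exact isCyclic_of_isMulTorsionFree_of_finiteIndex C

theorem eq_one_of_isOfFinOrder_quotient {N : Subgroup K} [N.Normal] [Finite N]
    (htor : ∀ g : K, IsOfFinOrder g → g ∈ N) (q : K ⧸ N) (hq : IsOfFinOrder q) : q = 1 := by
  obtain ⟨g, rfl⟩ := QuotientGroup.mk_surjective q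
  obtain ⟨n, hn, hgn⟩ := isOfFinOrder_iff_pow_eq_one.mp hq
  have hgnN : g ^ n ∈ N := (QuotientGroup.eq_one_iff _).mp (by rwa [QuotientGroup.mk_pow])
  have : IsOfFinOrder (g ^ n) := N.subtype.isOfFinOrder (isOfFinOrder_of_finite ⟨_, hgnN⟩)
  exact (QuotientGroup.eq_one_iff g).mpr (htor g (this.of_pow hn.ne'))

theorem normal_of_le_center {N : Subgroup K} (hN : N ≤ center K) : N.Normal :=
  ⟨fun a ha g => by rwa [mem_center_iff.mp (hN ha) g, mul_inv_cancel_right]⟩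

theorem nonempty_mulEquiv_int_prod_of_le_center {N : Subgroup K} [N.Normal] (hN : N ≤ center K)
    [IsCyclic (K ⧸ N)] [Infinite (K ⧸ N)] : Nonempty (K ≃* Multiplicative ℤ × N) := by
  obtain ⟨q, hq⟩ := IsCyclic.exists_generator (α := K ⧸ N)
  obtain ⟨v, rfl⟩ := QuotientGroup.mk_surjective q
  have hv : ¬IsOfFinOrder (v : K ⧸ N) := by
    rw [← orderOf_eq_zero_iff, orderOf_eq_card_of_forall_mem_zpowers hq,
      Nat.card_eq_zero_of_infinite]
  let f : Multiplicative ℤ × N →* K := (zpowersHom K v).noncommCoprod N.subtype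
    fun _ a => mem_center_iff.mp (hN a.2) _
  refine ⟨(MulEquiv.ofBijective f ⟨(injective_iff_map_eq_one f).mpr ?_, fun k => ?_⟩).symm⟩
  · rintro ⟨n, a⟩ h
    have hva : (v : K) ^ n.toAdd = a⁻¹ := eq_inv_of_mul_eq_one_left h
    have hn : (v : K ⧸ N) ^ n.toAdd = (v : K ⧸ N) ^ (0 : ℤ) := by
      rw [zpow_zero, ← QuotientGroup.mk_zpow, QuotientGroup.eq_one_iff, hva]
      exact inv_mem a.2
    have hn0 : n = 1 := injective_zpow_iff_not_isOfFinOrder.mpr hv hn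
    subst hn0
    exact Prod.ext rfl (Subtype.ext (inv_eq_one.mp (by simpa using hva.symm)))
  · obtain ⟨n, hn⟩ := mem_zpowers_iff.mp (hq (k : K ⧸ N))
    have hk : ((v : K) ^ n)⁻¹ * k ∈ N :=
      QuotientGroup.eq.mp (by rw [QuotientGroup.mk_zpow, hn])
    exact ⟨(.ofAdd n, ⟨_, hk⟩), mul_inv_cancel_left _ _⟩

theorem IsVirtuallyCyclic.nonempty_mulEquiv_int_prod [Infinite K] (hK : IsVirtuallyCyclic K)
    {N : Subgroup K} [Finite N] (hN : N ≤ center K)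
    (htor : ∀ g : K, IsOfFinOrder g → g ∈ N) : Nonempty (K ≃* Multiplicative ℤ × N) := by
  have : N.Normal := normal_of_le_center hN
  have : Infinite (K ⧸ N) := by
    rw [← index_eq_zero_iff_infinite]
    by_contra h
    have := (finite_iff_finite_and_finiteIndex N).mpr ⟨‹_›, ⟨h⟩⟩
    exact not_finite K
  have := (hK.of_surjective (QuotientGroup.mk'_surjective N)).isCyclic
    (eq_one_of_isOfFinOrder_quotient htor)
  exact nonempty_mulEquiv_int_prod_of_le_center hN

end

/-- Let `G` be a group whose centre contains an element `z` of order 2 that is the unique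
non-identity torsion (= finite-order) element of `G`. Then every infinite virtually
cyclic subgroup of `G` is isomorphic to `ℤ` or to `ℤ × ℤ/2`. -/
theorem infinite_virtuallyCyclic_subgroup_of_unique_central_involution
    (G : Type*) [Group G] (z : G)
    (hz : z ∈ Subgroup.center G) (hz2 : orderOf z = 2)
    (huniq : ∀ g : G, g ≠ 1 → IsOfFinOrder g → g = z)
    (H : Subgroup G) (hHinf : Infinite H)
    (hHvc : ∃ C : Subgroup H, IsCyclic C ∧ C.FiniteIndex) :
    Nonempty (H ≃* Multiplicative ℤ) ∨
      Nonempty (H ≃* Multiplicative ℤ × Multiplicative (ZMod 2)) := by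
  have htor : ∀ g : H, IsOfFinOrder g → g = 1 ∨ (g : G) = z := fun g hg =>
    or_iff_not_imp_left.mpr fun hg1 =>
      huniq g (by simpa using hg1) (H.subtype.isOfFinOrder hg)
  by_cases hzH : z ∈ H
  · let ζ : H := ⟨z, hzH⟩
    have hζ : ζ ∈ center H := mem_center_iff.mpr fun g => Subtype.ext (mem_center_iff.mp hz g)
    have hcard : Nat.card (zpowers ζ) = 2 := by rw [Nat.card_zpowers, orderOf_mk, hz2]
    have : Finite (zpowers ζ) := Nat.finite_of_card_ne_zero (by omega)
    obtain ⟨e⟩ := IsVirtuallyCyclic.nonempty_mulEquiv_int_prod hHvc (zpowers_le.mpr hζ)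
      fun g hg => (htor g hg).elim (· ▸ one_mem _)
        fun h => (Subtype.ext h : g = ζ) ▸ mem_zpowers ζ
    exact .inr ⟨e.trans (.prodCongr (.refl _) (mulEquivOfCyclicCardEq (by simp [hcard])))⟩
  · have : IsCyclic H := IsVirtuallyCyclic.isCyclic hHvc fun g hg =>
      (htor g hg).resolve_right fun h => hzH (h ▸ g.2)
    exact .inl ⟨intCyclicMulEquiv.symm⟩
end
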